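/- Let 0 < p < 1, let Φ : ℕ → [0, ∞) be nondecreasing and nonnegative, and let (α_k)_{k≥0} be a strictly increasing sequence of positive integers with Σ_k (Φ(M_{α_k})/M_{α_k}^{1/p−1})^{p/2} < ∞. Define β_k := (Φ(M_{α_k})/M_{α_k}^{1/p−1})^{1/2}, a_k := (M_{α_k}^{1/p−1}/λ)(D_{M_{α_k+1}} − D_{M_{α_k}}) with λ = sup_k m_k, and the martingale f = (f^{(A)})_{A≥0}, f^{(A)} := Σ_{{k : α_k < A}} β_k a_k. Then the Vilenkin–Fourier coefficients of f are given by: f̂(j) = (1/λ) · M_{α_k}^{(1/p−1)/2} · Φ(M_{α_k})^{1/2} whenever M_{α_k} ≤ j < M_{α_k+1} for some k, and f̂(j) = 0 whenever j does not lie in any interval [M_{α_k}, M_{α_k+1}). -/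

import Mathlib

open MeasureTheory Filter ENNReal Finset

noncomputable section

/-- The Vilenkin group `G_m`: complete direct product of cyclic groups `ℤ_{m_k}`. -/
abbrev Gm (m : ℕ → ℕ) : Type := ∀ k : ℕ, ZMod (m k)

/-- The generalized powers `M_0 = 1`, `M_{k+1} = m_k M_k`. -/
def Mgen (m : ℕ → ℕ) : ℕ → ℕ
  | 0 => 1
  | k + 1 => m k * Mgen m k

/-- The digits of `n` in the generalized number system `n = Σ_j n_j M_j`. -/
def digit (m : ℕ → ℕ) (n j : ℕ) : ℕ := (n / Mgen m j) % m j

/-- The generalized Rademacher functions `r_k(x) = exp(2πi x_k / m_k)`. -/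
def rade (m : ℕ → ℕ) (k : ℕ) (x : Gm m) : ℂ :=
  Complex.exp (2 * Real.pi * Complex.I * ((x k).val : ℂ) / (m k : ℂ))

/-- The Vilenkin system `ψ_n = Π_k r_k^{n_k}` (all digits `n_k` with `k > n` vanish). -/
def psi (m : ℕ → ℕ) (n : ℕ) (x : Gm m) : ℂ :=
  ∏ k ∈ Finset.range (n + 1), rade m k x ^ digit m n k

/-- The cylinder `I_n(x) = {y : y_0 = x_0, ..., y_{n-1} = x_{n-1}}`. -/
def cyl (m : ℕ → ℕ) (n : ℕ) (x : Gm m) : Set (Gm m) := {y | ∀ j < n, y j = x j}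

/-- Vilenkin–Fourier coefficient of an integrable function. -/
def fcoef (m : ℕ → ℕ) (μ : Measure (Gm m)) (f : Gm m → ℂ) (k : ℕ) : ℂ :=
  ∫ x, f x * (starRingEnd ℂ) (psi m k x) ∂μ

/-- Partial sums of the Vilenkin–Fourier series of a function. -/
def Spart (m : ℕ → ℕ) (μ : Measure (Gm m)) (f : Gm m → ℂ) (n : ℕ) (x : Gm m) : ℂ :=
  ∑ k ∈ Finset.range n, fcoef m μ f k * psi m k x

/-- The Dirichlet kernels `D_n = Σ_{k<n} ψ_k`. -/
def Dker (m : ℕ → ℕ) (n : ℕ) (x : Gm m) : ℂ :=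
  ∑ k ∈ Finset.range n, psi m k x

/-- `f = (f^{(n)})` is a martingale w.r.t. the filtration generated by the cylinders:
each `f^{(n)}` is integrable and, for `n ≤ k`, the conditional expectation of `f^{(k)}`
on the `n`-th σ-algebra (the average on each cylinder `I_n(x)`) equals `f^{(n)}`. -/
def IsVMartingale (m : ℕ → ℕ) (μ : Measure (Gm m)) (f : ℕ → Gm m → ℂ) : Prop :=
  (∀ n, Integrable (f n) μ) ∧
  ∀ n k : ℕ, n ≤ k → ∀ x : Gm m, f n x = (Mgen m n : ℂ) * ∫ t in cyl m n x, f k t ∂μ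

/-- Vilenkin–Fourier coefficient of a martingale: `lim_k ∫ f^{(k)} ψ̄_i dμ`; since the
integral is independent of `k` once `M_k > i`, and `M_{i+1} > i`, we take `k = i+1`. -/
def mfhat (m : ℕ → ℕ) (μ : Measure (Gm m)) (f : ℕ → Gm m → ℂ) (i : ℕ) : ℂ :=
  ∫ x, f (i + 1) x * (starRingEnd ℂ) (psi m i x) ∂μ

/-- The `H_p` (quasi-)norm of a martingale: `‖sup_n |f^{(n)}|‖_{L^p(μ)}`, as an `ℝ≥0∞`. -/
def HpNorm (m : ℕ → ℕ) (μ : Measure (Gm m)) (p : ℝ) (f : ℕ → Gm m → ℂ) : ℝ≥0∞ :=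
  (∫⁻ x, (⨆ n, (‖f n x‖₊ : ℝ≥0∞)) ^ p ∂μ) ^ (1 / p)

/-!
Any measure giving each cylinder `I_N(x)` mass `1 / M_N` pushes forward to the uniform measure
on `∏_{k<N} ℤ_{m_k}`. For `i, j < N` the function `ψ_i ψ̄_j` factors through this finite group
as the character with frequencies `i_k - j_k`, so it integrates to `1` if all digits agree, i.e.
`i = j`, and to `0` otherwise. Each block `D_{M_{α_k+1}} - D_{M_{α_k}}` is the sum of the `ψ_t`
over `M_{α_k} ≤ t < M_{α_k+1}`, and these intervals are disjoint because `α` is strictly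
increasing. Hence `f̂(j)` is `β_k M_{α_k}^{1/p-1} / λ` when `j` lies in the `k`-th interval (that
block already occurs in `f^{(j+1)}`, as `k ≤ α_k < M_{α_k} ≤ j`) and `0` otherwise.
-/

variable {m : ℕ → ℕ}

lemma Mgen_pos [∀ k, NeZero (m k)] (N : ℕ) : 0 < Mgen m N := by
  induction N with
  | zero => exact Nat.one_pos
  | succ n ih => exact Nat.mul_pos (NeZero.pos _) ih

lemma Mgen_monotone [∀ k, NeZero (m k)] : Monotone (Mgen m) :=
  monotone_nat_of_le_succ fun n => Nat.le_mul_of_pos_left _ (NeZero.pos (m n))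

lemma Mgen_eq_prod_range (N : ℕ) : Mgen m N = ∏ k ∈ range N, m k := by
  induction N with
  | zero => rfl
  | succ n ih => rw [prod_range_succ, ← ih, Mgen, mul_comm]

lemma two_pow_le_Mgen (hm : ∀ k, 2 ≤ m k) (N : ℕ) : 2 ^ N ≤ Mgen m N := by
  induction N with
  | zero => exact le_rfl
  | succ n ih => rw [pow_succ']; exact Nat.mul_le_mul (hm n) ih

lemma lt_Mgen (hm : ∀ k, 2 ≤ m k) (N : ℕ) : N < Mgen m N :=
  N.lt_two_pow_self.trans_le (two_pow_le_Mgen hm N)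

lemma mod_Mgen_succ (n k : ℕ) :
    n % Mgen m (k + 1) = n % Mgen m k + Mgen m k * digit m n k := by
  rw [Mgen, mul_comm]
  exact Nat.mod_mul

lemma mod_Mgen_eq_of_digit_eq {i j N : ℕ} (h : ∀ k < N, digit m i k = digit m j k) :
    i % Mgen m N = j % Mgen m N := by
  induction N with
  | zero => simp [Mgen, Nat.mod_one]
  | succ n ih =>
    rw [mod_Mgen_succ, mod_Mgen_succ, ih fun k hk => h k (by omega), h n n.lt_succ_self]

lemma eq_of_digit_eq {i j N : ℕ} (hi : i < Mgen m N) (hj : j < Mgen m N)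
    (h : ∀ k < N, digit m i k = digit m j k) : i = j := by
  simpa [Nat.mod_eq_of_lt hi, Nat.mod_eq_of_lt hj] using mod_Mgen_eq_of_digit_eq h

lemma digit_eq_zero_of_lt {n k : ℕ} (h : n < Mgen m k) : digit m n k = 0 := by
  simp [digit, Nat.div_eq_of_lt h]

lemma natCast_digit_eq_natCast_digit_iff {i j k : ℕ} :
    (digit m i k : ZMod (m k)) = digit m j k ↔ digit m i k = digit m j k := by
  rw [ZMod.natCast_eq_natCast_iff' _ _ (m k), digit, digit, Nat.mod_mod, Nat.mod_mod]

lemma rade_eq_stdAddChar (k : ℕ) [NeZero (m k)] (x : Gm m) :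
    rade m k x = ZMod.stdAddChar (x k) := by
  rw [ZMod.stdAddChar_apply, ZMod.toCircle_apply]
  rfl

def projFin (m : ℕ → ℕ) (N : ℕ) (x : Gm m) : ∀ k : Fin N, ZMod (m k) := fun k => x k

lemma psi_eq_prod_stdAddChar (hm : ∀ k, 2 ≤ m k) [∀ k, NeZero (m k)] {n N : ℕ} (hn : n < N)
    (x : Gm m) :
    psi m n x = ∏ k : Fin N, ZMod.stdAddChar (projFin m N x k * (digit m n k : ZMod (m k))) := by
  have hdigit : ∀ k ∈ range N, k ∉ range (n + 1) → rade m k x ^ digit m n k = 1 := by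
    intro k _ hk
    rw [digit_eq_zero_of_lt ((Nat.lt_of_not_le (by simpa using hk)).trans (lt_Mgen hm k)),
      pow_zero]
  rw [psi, prod_subset (range_subset_range.2 hn) hdigit,
    ← Fin.prod_univ_eq_prod_range (fun k => rade m k x ^ digit m n k)]
  refine prod_congr rfl fun k _ => ?_
  rw [rade_eq_stdAddChar, ← AddChar.map_nsmul_eq_pow, nsmul_eq_mul, mul_comm]
  rfl

lemma psi_mul_conj_psi_eq_prod (hm : ∀ k, 2 ≤ m k) [∀ k, NeZero (m k)] {i j N : ℕ}
    (hi : i < N) (hj : j < N) (x : Gm m) :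
    psi m i x * starRingEnd ℂ (psi m j x) = ∏ k : Fin N, ZMod.stdAddChar
      (projFin m N x k * ((digit m i k : ZMod (m k)) - (digit m j k : ZMod (m k)))) := by
  simp only [psi_eq_prod_stdAddChar hm hi, psi_eq_prod_stdAddChar hm hj, map_prod,
    ← AddChar.map_neg_eq_conj, ← prod_mul_distrib, ← AddChar.map_add_eq_mul, sub_eq_add_neg,
    mul_add, mul_neg]

lemma Dker_sub_Dker_eq_sum_Ico {a b : ℕ} (hab : a ≤ b) (x : Gm m) :
    Dker m b x - Dker m a x = ∑ t ∈ Ico a b, psi m t x :=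
  (sum_Ico_eq_sub _ hab).symm

def IsUniformOnCyl (μ : Measure (Gm m)) : Prop :=
  ∀ n x, μ (cyl m n x) = ((Mgen m n : ℝ≥0∞))⁻¹

section UniformOnCyl

variable {μ : Measure (Gm m)}

lemma IsUniformOnCyl.isProbabilityMeasure (hμ : IsUniformOnCyl μ) : IsProbabilityMeasure μ := by
  have huniv : cyl m 0 (fun _ => 0) = Set.univ := by ext; simp [cyl]
  exact ⟨by rw [← huniv, hμ, Mgen, Nat.cast_one, inv_one]⟩

lemma measurable_projFin (N : ℕ) : Measurable (projFin m N) :=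
  measurable_pi_lambda _ fun k => measurable_pi_apply (k : ℕ)

lemma measureReal_map_projFin_singleton (hμ : IsUniformOnCyl μ) (N : ℕ)
    (v : ∀ k : Fin N, ZMod (m k)) :
    (μ.map (projFin m N)).real {v} = (Mgen m N : ℝ)⁻¹ := by
  have hpre :
      projFin m N ⁻¹' {v} = cyl m N (fun k => if h : k < N then v ⟨k, h⟩ else 0) := by
    ext y
    simp only [Set.mem_preimage, Set.mem_singleton_iff, cyl, funext_iff, projFin, Fin.forall_iff]
    exact forall₂_congr fun k hk => by rw [dif_pos hk]
  rw [measureReal_def, Measure.map_apply (measurable_projFin N) (measurableSet_singleton v),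
    hpre, hμ, ENNReal.toReal_inv, ENNReal.toReal_natCast]

lemma integral_comp_projFin [∀ k, NeZero (m k)] (hμ : IsUniformOnCyl μ)
    (N : ℕ) (g : (∀ k : Fin N, ZMod (m k)) → ℂ) :
    ∫ x, g (projFin m N x) ∂μ = (Mgen m N : ℂ)⁻¹ * ∑ v, g v := by
  have := hμ.isProbabilityMeasure
  rw [← integral_map (measurable_projFin N).aemeasurable
    Measurable.of_discrete.aestronglyMeasurable, integral_fintype Integrable.of_finite, mul_sum]
  simp [measureReal_map_projFin_singleton hμ]

lemma integrable_comp_projFin [∀ k, NeZero (m k)] (hμ : IsUniformOnCyl μ)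
    (N : ℕ) (g : (∀ k : Fin N, ZMod (m k)) → ℂ) :
    Integrable (fun x => g (projFin m N x)) μ := by
  have := hμ.isProbabilityMeasure
  exact (integrable_map_measure Measurable.of_discrete.aestronglyMeasurable
    (measurable_projFin N).aemeasurable).1 Integrable.of_finite

lemma integral_prod_stdAddChar [∀ k, NeZero (m k)] (hμ : IsUniformOnCyl μ)
    (N : ℕ) (c : ∀ k : Fin N, ZMod (m k)) :
    ∫ x, ∏ k : Fin N, ZMod.stdAddChar (projFin m N x k * c k) ∂μ =
      if c = 0 then 1 else 0 := by
  rw [integral_comp_projFin hμ N (fun v => ∏ k, ZMod.stdAddChar (v k * c k)),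
    ← Fintype.prod_sum (fun (k : Fin N) (w : ZMod (m k)) => ZMod.stdAddChar (w * c k))]
  have hM : ∏ k : Fin N, (m k : ℂ) = Mgen m N := by
    rw [Fin.prod_univ_eq_prod_range (fun k => (m k : ℂ)), Mgen_eq_prod_range, Nat.cast_prod]
  have hc : (∀ k ∈ univ, c k = 0) ↔ c = 0 := by simp [funext_iff]
  simp only [AddChar.sum_mulShift _ (ZMod.isPrimitive_stdAddChar _), ZMod.card, Nat.cast_ite,
    Nat.cast_zero, prod_ite_zero, hc, hM]
  split_ifs
  · exact inv_mul_cancel₀ (Nat.cast_ne_zero.2 (Mgen_pos N).ne')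
  · exact mul_zero _

lemma integrable_psi_mul_conj_psi (hm : ∀ k, 2 ≤ m k) [∀ k, NeZero (m k)]
    (hμ : IsUniformOnCyl μ) (i j : ℕ) :
    Integrable (fun x => psi m i x * starRingEnd ℂ (psi m j x)) μ := by
  simp only [psi_mul_conj_psi_eq_prod hm (Nat.lt_succ_of_le (Nat.le_add_right i j))
    (Nat.lt_succ_of_le (Nat.le_add_left j i))]
  exact integrable_comp_projFin hμ _ fun v =>
    ∏ k, ZMod.stdAddChar (v k * ((digit m i k : ZMod (m k)) - (digit m j k : ZMod (m k))))

lemma integral_psi_mul_conj_psi (hm : ∀ k, 2 ≤ m k) [∀ k, NeZero (m k)]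
    (hμ : IsUniformOnCyl μ) (i j : ℕ) :
    ∫ x, psi m i x * starRingEnd ℂ (psi m j x) ∂μ = if i = j then 1 else 0 := by
  set N := i + j + 1
  have hi : i < N := Nat.lt_succ_of_le (Nat.le_add_right i j)
  have hj : j < N := Nat.lt_succ_of_le (Nat.le_add_left j i)
  have hdigits : (∀ k : Fin N, digit m i k = digit m j k) ↔ i = j :=
    ⟨fun h => eq_of_digit_eq (hi.trans (lt_Mgen hm N)) (hj.trans (lt_Mgen hm N))
      fun k hk => h ⟨k, hk⟩, fun h _ => h ▸ rfl⟩
  simp only [psi_mul_conj_psi_eq_prod hm hi hj, integral_prod_stdAddChar hμ, funext_iff,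
    Pi.zero_apply, sub_eq_zero, natCast_digit_eq_natCast_digit_iff, hdigits]

lemma integral_sum_mul_Dker_sub_mul_conj_psi (hm : ∀ k, 2 ≤ m k) [∀ k, NeZero (m k)]
    (hμ : IsUniformOnCyl μ) {ι : Type*} (s : Finset ι) (c : ι → ℂ) (a b : ι → ℕ)
    (hab : ∀ k ∈ s, a k ≤ b k) (j : ℕ) :
    ∫ x, (∑ k ∈ s, c k * (Dker m (b k) x - Dker m (a k) x)) *
        starRingEnd ℂ (psi m j x) ∂μ =
      ∑ k ∈ s, if j ∈ Ico (a k) (b k) then c k else 0 := by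
  have hexpand : ∀ x, (∑ k ∈ s, c k * (Dker m (b k) x - Dker m (a k) x)) *
      starRingEnd ℂ (psi m j x) =
      ∑ k ∈ s, ∑ t ∈ Ico (a k) (b k), c k * (psi m t x * starRingEnd ℂ (psi m j x)) := by
    intro x
    rw [sum_mul]
    refine sum_congr rfl fun k hk => ?_
    rw [Dker_sub_Dker_eq_sum_Ico (hab k hk), mul_sum, sum_mul]
    exact sum_congr rfl fun t _ => mul_assoc _ _ _
  have hint : ∀ k t, Integrable (fun x => c k * (psi m t x * starRingEnd ℂ (psi m j x))) μ :=
    fun k t => (integrable_psi_mul_conj_psi hm hμ t j).const_mul (c k)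
  simp only [hexpand]
  rw [integral_finsetSum _ fun k _ => integrable_finsetSum _ fun t _ => hint k t]
  refine sum_congr rfl fun k _ => ?_
  rw [integral_finsetSum _ fun t _ => hint k t]
  simp only [integral_const_mul, integral_psi_mul_conj_psi hm hμ, mul_ite, mul_one, mul_zero,
    sum_ite_eq']

end UniformOnCyl

lemma eq_of_mem_Ico_Mgen [∀ k, NeZero (m k)] {α : ℕ → ℕ} (hα : StrictMono α)
    {j k k' : ℕ} (hk : j ∈ Ico (Mgen m (α k)) (Mgen m (α k + 1)))
    (hk' : j ∈ Ico (Mgen m (α k')) (Mgen m (α k' + 1))) : k = k' := by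
  have hsep : ∀ {k k'}, k < k' → Mgen m (α k + 1) ≤ Mgen m (α k') :=
    fun h => Mgen_monotone (hα h)
  rw [mem_Ico] at hk hk'
  by_contra hne
  rcases lt_or_gt_of_ne hne with h | h
  · have := hsep h; omega
  · have := hsep h; omega

lemma rpow_half_div_rpow_mul_rpow_div {φ M : ℝ} (hφ : 0 ≤ φ) (hM : 0 < M) (e c : ℝ) :
    (φ / M ^ e) ^ (1 / 2 : ℝ) * (M ^ e / c) = 1 / c * M ^ (e / 2) * φ ^ (1 / 2 : ℝ) := by
  have hsqrt : (M ^ e) ^ (1 / 2 : ℝ) = M ^ (e / 2) := by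
    rw [← Real.rpow_mul hM.le]; ring_nf
  have hsq : M ^ e = M ^ (e / 2) * M ^ (e / 2) := by
    rw [← Real.rpow_add hM]; ring_nf
  rw [Real.div_rpow hφ (Real.rpow_nonneg hM.le e), hsqrt, hsq]
  field_simp

theorem fourier_coefficients_of_counterexample_martingale_general
    (m : ℕ → ℕ) (hm : ∀ k, 2 ≤ m k) (lam : ℕ)
    (μ : Measure (Gm m)) (hμ : ∀ n x, μ (cyl m n x) = ((Mgen m n : ℝ≥0∞))⁻¹)
    (p : ℝ)
    (Φ : ℕ → ℝ) (hΦ0 : ∀ n, 0 ≤ Φ n)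
    (α : ℕ → ℕ) (hα : StrictMono α) :
    let β : ℕ → ℝ := fun k =>
      (Φ (Mgen m (α k)) / (Mgen m (α k) : ℝ) ^ (1 / p - 1)) ^ ((1 : ℝ) / 2)
    let a : ℕ → Gm m → ℂ := fun k x =>
      (((Mgen m (α k) : ℝ) ^ (1 / p - 1) / (lam : ℝ) : ℝ) : ℂ) *
        (Dker m (Mgen m (α k + 1)) x - Dker m (Mgen m (α k)) x)
    let f : ℕ → Gm m → ℂ := fun A x =>
      ∑ k ∈ (Finset.range A).filter (fun k => α k < A), (β k : ℂ) * a k x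
    ∀ j : ℕ,
      (∀ k : ℕ, Mgen m (α k) ≤ j → j < Mgen m (α k + 1) →
        mfhat m μ f j =
          (((1 / (lam : ℝ)) * (Mgen m (α k) : ℝ) ^ ((1 / p - 1) / 2) *
            (Φ (Mgen m (α k))) ^ ((1 : ℝ) / 2) : ℝ) : ℂ)) ∧
      ((∀ k : ℕ, ¬(Mgen m (α k) ≤ j ∧ j < Mgen m (α k + 1))) →
        mfhat m μ f j = 0) := by
  intro β a f j
  have : ∀ k, NeZero (m k) := fun k => ⟨by linarith [hm k]⟩
  set S := (range (j + 1)).filter (fun k => α k < j + 1)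
  have hcoef : mfhat m μ f j = ∑ k ∈ S, if j ∈ Ico (Mgen m (α k)) (Mgen m (α k + 1)) then
      (β k : ℂ) * (((Mgen m (α k) : ℝ) ^ (1 / p - 1) / (lam : ℝ) : ℝ) : ℂ) else 0 := by
    simp only [mfhat, f, a, ← mul_assoc]
    exact integral_sum_mul_Dker_sub_mul_conj_psi hm hμ _ _ _ _
      (fun k _ => Mgen_monotone (α k).le_succ) j
  refine ⟨fun k hk₁ hk₂ => ?_, fun hj => ?_⟩
  · have hjk : j ∈ Ico (Mgen m (α k)) (Mgen m (α k + 1)) := mem_Ico.2 ⟨hk₁, hk₂⟩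
    have hkS : k ∈ S := by
      have : k ≤ α k := hα.id_le k
      have := lt_Mgen hm (α k)
      simp only [S, mem_filter, mem_range]
      omega
    rw [hcoef, sum_eq_single_of_mem k hkS fun k' _ hk' =>
        if_neg fun h => hk' (eq_of_mem_Ico_Mgen hα h hjk),
      if_pos hjk, ← Complex.ofReal_mul]
    exact congrArg _ (rpow_half_div_rpow_mul_rpow_div (hΦ0 _)
      (Nat.cast_pos.2 (Mgen_pos _)) _ _)
  · rw [hcoef]
    exact sum_eq_zero fun k _ => if_neg fun h => hj k (mem_Ico.1 h)

/-- The Vilenkin–Fourier coefficients of the martingale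
`f^{(A)} = Σ_{α_k < A} β_k a_k` (with `β_k = (Φ(M_{α_k})/M_{α_k}^{1/p-1})^{1/2}` and
`a_k = (M_{α_k}^{1/p-1}/λ)(D_{M_{α_k+1}} - D_{M_{α_k}})`) are
`f̂(j) = (1/λ) M_{α_k}^{(1/p-1)/2} Φ(M_{α_k})^{1/2}` for `M_{α_k} ≤ j < M_{α_k+1}`,
and `f̂(j) = 0` if `j` lies in no interval `[M_{α_k}, M_{α_k+1})`. -/
theorem fourier_coefficients_of_counterexample_martingale
    (m : ℕ → ℕ) (hm : ∀ k, 2 ≤ m k) (lam : ℕ) (hlam : ∀ k, m k ≤ lam)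
    (μ : Measure (Gm m)) (hμ : ∀ n x, μ (cyl m n x) = ((Mgen m n : ℝ≥0∞))⁻¹)
    (p : ℝ) (hp0 : 0 < p) (hp1 : p < 1)
    (Φ : ℕ → ℝ) (hΦ0 : ∀ n, 0 ≤ Φ n) (hΦmono : Monotone Φ)
    (α : ℕ → ℕ) (hα : StrictMono α) (hα0 : ∀ k, 0 < α k)
    (hsum : Summable fun k =>
      (Φ (Mgen m (α k)) / (Mgen m (α k) : ℝ) ^ (1 / p - 1)) ^ (p / 2)) :
    let β : ℕ → ℝ := fun k =>
      (Φ (Mgen m (α k)) / (Mgen m (α k) : ℝ) ^ (1 / p - 1)) ^ ((1 : ℝ) / 2)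
    let a : ℕ → Gm m → ℂ := fun k x =>
      (((Mgen m (α k) : ℝ) ^ (1 / p - 1) / (lam : ℝ) : ℝ) : ℂ) *
        (Dker m (Mgen m (α k + 1)) x - Dker m (Mgen m (α k)) x)
    let f : ℕ → Gm m → ℂ := fun A x =>
      ∑ k ∈ (Finset.range A).filter (fun k => α k < A), (β k : ℂ) * a k x
    ∀ j : ℕ,
      (∀ k : ℕ, Mgen m (α k) ≤ j → j < Mgen m (α k + 1) →
        mfhat m μ f j =
          (((1 / (lam : ℝ)) * (Mgen m (α k) : ℝ) ^ ((1 / p - 1) / 2) *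
            (Φ (Mgen m (α k))) ^ ((1 : ℝ) / 2) : ℝ) : ℂ)) ∧
      ((∀ k : ℕ, ¬(Mgen m (α k) ≤ j ∧ j < Mgen m (α k + 1))) →
        mfhat m μ f j = 0) :=
  fourier_coefficients_of_counterexample_martingale_general m hm lam μ hμ p Φ hΦ0 α hα
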